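/- arXiv:0801.0418 — 2 statements merged into one kernel-verified Lean document; each statement's English description precedes it below -/
import Mathlib

section
/- The space of GL(V)-equivariant linear endomorphisms of V^{⊗k} is spanned by the elementary invariant tensors t_σ, σ ∈ Σ_k. -/
/-!
Let `ρ` be the permutation representation of `Σ_k` on `W = V^{⊗k}`. Since `k!` is invertible,
`W` is a semisimple `K[Σ_k]`-module, so by the Jacobson density theorem every endomorphism of `W`
commuting with the commutant of `ρ` lies in the image of `K[Σ_k]`, i.e. in the span of the `t_σ`.
The commutant of `ρ` consists of the `Σ_k`-invariants of `End W`, and averaging the spanning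
family `a₁ ⊗ ⋯ ⊗ a_k` followed by polarization shows that it is spanned by the `c^{⊗k}`,
`c ∈ End V`. Finally `f` commutes with every `c^{⊗k}`: the commutator of `f` with
`(c + s)^{⊗k}` is polynomial in `s` and vanishes whenever `c + s` is invertible, which excludes
only finitely many `s`.
-/

open TensorProduct PiTensorProduct

theorem sum_pow_smul_eq_zero_of_infinite {K M ι : Type*} [Field K] [AddCommGroup M]
    [Module K M] [Fintype ι] (d : ι → ℕ) (m : ι → M)
    (h : {s : K | ∑ i, s ^ d i • m i = 0}.Infinite) (s : K) : ∑ i, s ^ d i • m i = 0 := by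
  rw [← Module.forall_dual_apply_eq_zero_iff K]
  intro ℓ
  let p : Polynomial K := ∑ i, Polynomial.C (ℓ (m i)) * Polynomial.X ^ d i
  have hp : ∀ s, p.eval s = ℓ (∑ i, s ^ d i • m i) := fun s => by
    simp only [p, Polynomial.eval_finsetSum, Polynomial.eval_mul, Polynomial.eval_C,
      Polynomial.eval_pow, Polynomial.eval_X, map_sum, map_smul, smul_eq_mul, mul_comm]
  have hp0 : p = 0 := Polynomial.eq_zero_of_infinite_isRoot p <| h.mono fun s hs => by
    show p.eval s = 0
    rw [hp, hs, map_zero]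
  rw [← hp, hp0, Polynomial.eval_zero]

namespace MultilinearMap

open Finset

variable {R M N ι : Type*} [Fintype ι]

theorem map_const_add_smul [CommSemiring R] [AddCommMonoid M] [Module R M] [AddCommMonoid N]
    [Module R N] [DecidableEq ι] (μ : MultilinearMap R (fun _ : ι => M) N) (x y : M) (s : R) :
    μ (fun _ => x + s • y) =
      ∑ S : Finset ι, s ^ #Sᶜ • μ (S.piecewise (fun _ => x) fun _ => y) := by
  rw [show (fun _ : ι => x + s • y) = (fun _ => x) + fun _ => s • y from rfl, μ.map_add_univ]
  refine sum_congr rfl fun S _ => ?_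
  rw [← prod_const, ← μ.map_piecewise_smul]
  congr 1
  ext i
  by_cases hi : i ∈ S <;> simp [hi]

theorem map_const_eq_zero_of_infinite [Field R] [AddCommGroup M] [Module R M] [AddCommGroup N]
    [Module R N] (μ : MultilinearMap R (fun _ : ι => M) N) (x y : M)
    (h : {s : R | μ (fun _ => x + s • y) = 0}.Infinite) : μ (fun _ => x) = 0 := by
  classical
  simp only [map_const_add_smul] at h
  have := sum_pow_smul_eq_zero_of_infinite _ _ h 0
  rwa [← map_const_add_smul, zero_smul, add_zero] at this

/-- Polarization, by inclusion–exclusion over the values missed by a map `ι → ι`. -/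
theorem sum_perm_eq_sum_neg_one_pow_smul [CommSemiring R] [AddCommMonoid M] [Module R M]
    [AddCommGroup N] [Module R N] [DecidableEq ι] (μ : MultilinearMap R (fun _ : ι => M) N)
    (a : ι → M) :
    ∑ σ : Equiv.Perm ι, μ (fun i => a (σ i)) =
      ∑ T : Finset ι, (-1 : ℤ) ^ #T • μ fun _ => ∑ j ∈ Tᶜ, a j := by
  let missing (j : ι) : Finset (ι → ι) := {φ | ∀ i, φ i ≠ j}
  have hperm : ∑ σ : Equiv.Perm ι, μ (fun i => a (σ i)) =
      ∑ φ ∈ {φ : ι → ι | φ.Surjective}, μ (fun i => a (φ i)) :=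
    sum_bij (fun σ _ => ⇑σ) (fun σ _ => by simpa using σ.surjective)
      (fun _ _ _ _ h => Equiv.ext (congrFun h))
      (fun φ hφ => ⟨.ofBijective φ (Finite.surjective_iff_bijective.mp (by simpa using hφ)),
        mem_univ _, rfl⟩)
      fun _ _ => rfl
  have hsurj :
      ({φ : ι → ι | φ.Surjective} : Finset _) = univ.inf fun j => (missing j)ᶜ := by
    ext φ
    rw [mem_filter]
    simp [missing, Function.Surjective, mem_inf]
  have hinf (T : Finset ι) : T.inf missing = Fintype.piFinset fun _ => Tᶜ := by
    ext φ
    simp only [missing, mem_inf, mem_filter, mem_univ, true_and, Fintype.mem_piFinset, mem_compl]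
    exact ⟨fun h i hi => h _ hi i rfl, fun h j hj i hij => h i (hij ▸ hj)⟩
  rw [hperm, hsurj, inclusion_exclusion_sum_inf_compl]
  refine sum_congr rfl fun T _ => ?_
  rw [hinf, μ.map_sum_finset]

end MultilinearMap

theorem Commute.of_mem_span {R A : Type*} [CommSemiring R] [Semiring A] [Algebra R A] {a b : A}
    {s : Set A} (h : ∀ c ∈ s, Commute a c) (hb : b ∈ Submodule.span R s) : Commute a b := by
  induction hb using Submodule.span_induction with
  | mem c hc => exact h c hc
  | zero => exact Commute.zero_right a
  | add c d _ _ hc hd => exact hc.add_right hd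
  | smul r c _ hc => exact hc.smul_right r

namespace Representation

open scoped MonoidAlgebra

variable {K G W : Type*} [Field K] [Group G] [AddCommGroup W] [Module K W]

theorem asAlgebraHom_mem_span_range (ρ : Representation K G W) (r : K[G]) :
    asAlgebraHom ρ r ∈ Submodule.span K (Set.range ρ) := by
  induction r using MonoidAlgebra.induction_on with
  | of g => exact Submodule.subset_span ⟨g, by simp⟩
  | add a b ha hb => rw [map_add]; exact add_mem ha hb
  | smul c a ha => rw [map_smul]; exact Submodule.smul_mem _ c ha

/-- The double centralizer theorem for a semisimple group algebra. -/
theorem mem_span_range_of_forall_commute [Finite G] [NeZero (Nat.card G : K)] [Module.Finite K W]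
    (ρ : Representation K G W) (f : Module.End K W)
    (hf : ∀ h : Module.End K W, (∀ g, Commute h (ρ g)) → Commute f h) :
    f ∈ Submodule.span K (Set.range ρ) := by
  let F : Module.End (Module.End K[G] ρ.asModule) ρ.asModule :=
    { toFun := f
      map_add' := f.map_add
      map_smul' := fun h m => by
        have hcomm : ∀ g, Commute (h.restrictScalars K : Module.End K W) (ρ g) := fun g =>
          LinearMap.ext fun x => by
            have := h.map_smul (MonoidAlgebra.of K G g) x
            rw [MonoidAlgebra.of_apply, single_smul, single_smul, one_smul, one_smul] at this
            exact this
        exact LinearMap.congr_fun (hf _ hcomm).eq m }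
  obtain ⟨s, hs⟩ := Module.Finite.fg_top (R := K) (M := W)
  obtain ⟨r, hr⟩ := jacobson_density F s
  have hfr : f = asAlgebraHom ρ r := LinearMap.ext_on hs fun m hm => hr m hm
  exact hfr ▸ asAlgebraHom_mem_span_range ρ r

end Representation

namespace PiTensorProduct

section Basis

variable {R ι : Type*} [CommSemiring R] [Fintype ι] [DecidableEq ι] {M κ : ι → Type*}
  [∀ i, AddCommMonoid (M i)] [∀ i, Module R (M i)]

theorem map_basis_end [∀ i, Fintype (κ i)] [∀ i, DecidableEq (κ i)]
    (b : ∀ i, Module.Basis (κ i) R (M i)) (p q : ∀ i, κ i) :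
    map (fun i => (b i).end (p i, q i)) = (Basis.piTensorProduct b).end (p, q) := by
  refine (Basis.piTensorProduct b).ext fun r => ?_
  rw [Module.Basis.end_apply_apply, Basis.piTensorProduct_apply, map_tprod]
  simp only [Module.Basis.end_apply_apply]
  split_ifs with hqr
  · subst hqr; simp
  · obtain ⟨i, hi⟩ := Function.ne_iff.mp hqr
    exact (tprod R).map_coord_zero i (by simp [hi])

theorem span_range_map_eq_top [∀ i, Module.Free R (M i)] [∀ i, Module.Finite R (M i)] :
    Submodule.span R (Set.range (map (R := R) (s := M) (t := M))) = ⊤ := by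
  classical
  let b i := Module.Free.chooseBasis R (M i)
  refine eq_top_iff.2 ((Basis.piTensorProduct b).end.span_eq.ge.trans (Submodule.span_mono ?_))
  rintro _ ⟨⟨p, q⟩, rfl⟩
  exact ⟨_, map_basis_end b p q⟩

end Basis

variable (K V ι : Type*) [Field K] [AddCommGroup V] [Module K V]

noncomputable def permRep : Representation K (Equiv.Perm ι) (⨂[K] _ : ι, V) where
  toFun σ := (reindex K (fun _ => V) σ).toLinearMap
  map_one' := by
    ext
    simp only [LinearMap.compMultilinearMap_apply, LinearEquiv.coe_coe, reindex_tprod]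
    rfl
  map_mul' σ τ := by
    ext
    simp only [LinearMap.compMultilinearMap_apply, LinearEquiv.coe_coe, reindex_tprod,
      Module.End.mul_apply]
    rfl

variable {K V ι}

@[simp]
theorem permRep_tprod (σ : Equiv.Perm ι) (v : ι → V) :
    permRep K V ι σ (tprod K v) = tprod K fun i => v (σ⁻¹ i) :=
  reindex_tprod σ v

theorem linHom_permRep_map (σ : Equiv.Perm ι) (a : ι → Module.End K V) :
    (permRep K V ι).linHom (permRep K V ι) σ (map a) = map fun i => a (σ⁻¹ i) := by
  ext v
  simp only [Representation.linHom_apply, LinearMap.compMultilinearMap_apply, LinearMap.comp_apply,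
    permRep_tprod, map_tprod]
  congr 1
  funext i
  exact congrArg _ (congrArg v (σ.apply_symm_apply i))

variable [Fintype ι]

theorem mem_span_map_const_of_forall_commute [DecidableEq ι] [FiniteDimensional K V]
    [NeZero (Nat.card (Equiv.Perm ι) : K)] {h : Module.End K (⨂[K] _ : ι, V)}
    (hh : ∀ σ, Commute h (permRep K V ι σ)) :
    h ∈ Submodule.span K (Set.range fun c : Module.End K V => map fun _ : ι => c) := by
  let C := (permRep K V ι).linHom (permRep K V ι)
  let : Invertible (Fintype.card (Equiv.Perm ι) : K) :=
    invertibleOfNonzero (by rw [Fintype.card_eq_nat_card]; exact NeZero.ne _)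
  have hinv : h ∈ C.invariants := fun σ => by
    change permRep K V ι σ * h * permRep K V ι σ⁻¹ = h
    rw [← (hh σ).eq, mul_assoc, ← map_mul, mul_inv_cancel, map_one, mul_one]
  have hsym (a : ι → Module.End K V) :
      C.averageMap (map a) ∈ Submodule.span K (Set.range fun c => map fun _ : ι => c) := by
    simp only [Representation.averageMap, GroupAlgebra.average, map_smul, map_sum,
      Representation.asAlgebraHom_of, LinearMap.smul_apply, LinearMap.sum_apply, C,
      linHom_permRep_map]
    refine Submodule.smul_mem _ _ ?_
    rw [Fintype.sum_bijective (fun σ : Equiv.Perm ι => σ⁻¹) inv_involutive.bijective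
      (fun σ => map fun i => a (σ⁻¹ i)) (fun σ => map fun i => a (σ i)) fun _ => rfl]
    simp only [← mapMultilinear_apply, MultilinearMap.sum_perm_eq_sum_neg_one_pow_smul]
    exact Submodule.sum_mem _ fun T _ =>
      Submodule.smul_of_tower_mem _ _ (Submodule.subset_span ⟨_, rfl⟩)
  have himage : (⊤ : Submodule K (Module.End K (⨂[K] _ : ι, V))).map C.averageMap ≤
      Submodule.span K (Set.range fun c => map fun _ : ι => c) := by
    rw [← span_range_map_eq_top, Submodule.map_span_le]
    rintro _ ⟨a, rfl⟩
    exact hsym a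
  rw [← C.averageMap_id h hinv]
  exact himage (Submodule.mem_map_of_mem trivial)

theorem commute_map_const_of_forall_linearEquiv [Infinite K] [FiniteDimensional K V]
    {f : Module.End K (⨂[K] _ : ι, V)}
    (hf : ∀ g : V ≃ₗ[K] V, Commute f (map fun _ => g.toLinearMap)) (c : Module.End K V) :
    Commute f (map fun _ => c) := by
  let μ := (LinearMap.mulLeft K f - LinearMap.mulRight K f).compMultilinearMap
    (mapMultilinear K (fun _ : ι => V) (fun _ => V))
  have hμ : ∀ a, μ a = f * map a - map a * f := fun a => rfl
  suffices μ (fun _ => c) = 0 by rwa [hμ, sub_eq_zero] at this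
  refine μ.map_const_eq_zero_of_infinite c (-1) (c.finite_spectrum.infinite_compl.mono ?_)
  intro s hs
  have hunit : IsUnit (c + s • -1) := by
    have : c + s • -1 = -(algebraMap K _ s - c) := by
      rw [Algebra.algebraMap_eq_smul_one, smul_neg, neg_sub, sub_eq_add_neg]
    rw [this, IsUnit.neg_iff]
    exact spectrum.notMem_iff.mp hs
  obtain ⟨u, hu⟩ := hunit
  have := hf (LinearMap.GeneralLinearGroup.generalLinearEquiv K V u)
  rw [LinearMap.GeneralLinearGroup.generalLinearEquiv_to_linearMap, hu] at this
  show μ _ = 0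
  rw [hμ, this.eq, sub_self]

end PiTensorProduct

/-- The space of `GL(V)`-equivariant linear endomorphisms of `V^{⊗k}`
is spanned by the elementary invariant tensors `t_σ`, `σ ∈ Σ_k`. -/
theorem equivariant_mem_span_elementary
    {K : Type} [Field K] [CharZero K]
    {V : Type} [AddCommGroup V] [Module K V] [FiniteDimensional K V]
    (k : ℕ)
    (t : Equiv.Perm (Fin k) → (⨂[K] (_ : Fin k), V) →ₗ[K] ⨂[K] (_ : Fin k), V)
    (ht : ∀ σ (v : Fin k → V), t σ (tprod K v) = tprod K fun i => v (σ⁻¹ i))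
    (f : (⨂[K] (_ : Fin k), V) →ₗ[K] ⨂[K] (_ : Fin k), V)
    (hf : ∀ g : V ≃ₗ[K] V,
      f ∘ₗ PiTensorProduct.map (fun _ : Fin k => g.toLinearMap) =
        PiTensorProduct.map (fun _ : Fin k => g.toLinearMap) ∘ₗ f) :
    f ∈ Submodule.span K (Set.range t) := by
  have ht_eq : t = permRep K V (Fin k) :=
    funext fun σ => PiTensorProduct.ext <| MultilinearMap.ext fun v => by simp [ht]
  rw [ht_eq]
  refine (permRep K V (Fin k)).mem_span_range_of_forall_commute f fun h hh => ?_
  refine Commute.of_mem_span (R := K) ?_ (mem_span_map_const_of_forall_commute hh)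
  rintro _ ⟨c, rfl⟩
  exact commute_map_const_of_forall_linearEquiv hf c
end

section
/- If dim(V) ≥ 3, then the space of GL(V)-equivariant linear maps Lin(V^{⊗2} ⊗ Sym(V^{⊗2}, V), V), where Sym(V^{⊗2},V) denotes symmetric bilinear maps, is 3-dimensional, spanned by X⊗Y⊗F ↦ F(X,Y), X⊗Y⊗F ↦ Y·Tr(F(X,−)), and X⊗Y⊗F ↦ X·Tr(F(Y,−)). -/
/-!
Fix a basis `e` of `V`. An equivariant `f` is determined by its coordinates
`T(a,b;i,j,k;m) = e_m^*(f(e_a ⊗ e_b ⊗ S_{ijk}))`, where the maps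
`S_{ijk}(v,w) = (v_i w_j + v_j w_i) e_k` span `Sym(V^{⊗2},V)` (here `2` is invertible).
Equivariance under diagonal matrices forces `{a,b,k} = {i,j,m}` as multisets whenever `T ≠ 0`, and
under permutation matrices makes `T` invariant under relabelling the basis. So on pairwise distinct
`a,b,k` all coordinates are determined by three of them, taken at one fixed triple, and the three
basic maps realise these three independently. The linear term in `s` of equivariance under the
transvections `x ↦ x + s x_q e_p` trades a repeated index among `a,b,k` for a fresh one, which exists
because `dim V ≥ 3`; hence an equivariant map whose three chosen coordinates vanish is zero.
-/

open TensorProduct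

section

set_option linter.unusedSectionVars false

variable (K : Type) [Field K] [CharZero K]
variable (V : Type) [AddCommGroup V] [Module K V] [FiniteDimensional K V]

/-- The subspace `Sym(V^{⊗2}, V)` of symmetric bilinear maps `F : V ⊗ V → V`,
i.e. those with `F(v' ⊗ v'') = F(v'' ⊗ v')`. -/
def symBil : Submodule K ((V ⊗[K] V) →ₗ[K] V) where
  carrier := {F | ∀ v w : V, F (v ⊗ₜ[K] w) = F (w ⊗ₜ[K] v)}
  add_mem' := by
    intro a b ha hb v w
    simp [ha v w, hb v w]
  zero_mem' := by intro v w; simp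
  smul_mem' := by
    intro c F hF v w
    simp [hF v w]

variable {K V}

/-- The induced action of `g ∈ GL(V)` on bilinear maps: `F ↦ g ∘ F ∘ (g⁻¹ ⊗ g⁻¹)`. -/
noncomputable def glBil (g : V ≃ₗ[K] V) :
    ((V ⊗[K] V) →ₗ[K] V) →ₗ[K] ((V ⊗[K] V) →ₗ[K] V) :=
  (LinearMap.llcomp K (V ⊗[K] V) V V g.toLinearMap) ∘ₗ
    (LinearMap.lcomp K V (TensorProduct.map g.symm.toLinearMap g.symm.toLinearMap))

lemma glBil_mem_symBil (g : V ≃ₗ[K] V) (F : (V ⊗[K] V) →ₗ[K] V)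
    (hF : F ∈ symBil K V) : glBil g F ∈ symBil K V := by
  intro v w
  simp only [glBil, LinearMap.comp_apply, LinearMap.llcomp_apply,
    LinearMap.lcomp_apply, TensorProduct.map_tmul]
  rw [hF]

/-- The action of `g ∈ GL(V)` restricted to symmetric bilinear maps. -/
noncomputable def glSymBil (g : V ≃ₗ[K] V) : symBil K V →ₗ[K] symBil K V :=
  (glBil g).restrict (fun F hF => glBil_mem_symBil g F hF)

end

theorem eq_zero_of_forall_sum_pow_smul_eq_zero {K M : Type*} [Field K] [Infinite K]
    [AddCommGroup M] [Module K M] {n : ℕ} (w : Fin n → M)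
    (h : ∀ s : K, ∑ i : Fin n, s ^ (i : ℕ) • w i = 0) (i : Fin n) : w i = 0 := by
  rw [← Module.forall_dual_apply_eq_zero_iff K]
  intro χ
  let p : Polynomial K := ∑ i : Fin n, Polynomial.monomial (i : ℕ) (χ (w i))
  have hp : p = 0 := Polynomial.funext fun s => by
    simpa [p, Polynomial.eval_finsetSum, mul_comm] using congrArg χ (h s)
  simpa [p, Polynomial.finsetSum_coeff, Polynomial.coeff_monomial, Fin.val_inj]
    using congrArg (Polynomial.coeff · i) hp

theorem exists_ne_and_ne {ι : Type*} (x : Fin 3 ↪ ι) (a b : ι) : ∃ z, z ≠ a ∧ z ≠ b := by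
  classical
  by_contra! h
  have hsub : Finset.univ.map x ⊆ {a, b} := fun z _ => by
    rcases eq_or_ne z a with rfl | hz
    · simp
    · simp [h z hz]
  have := (Finset.card_le_card hsub).trans Finset.card_le_two
  simp at this

section SymProd

variable {K V : Type} [Field K] [AddCommGroup V] [Module K V]

theorem symBil_ext {F G : symBil K V}
    (h : ∀ v w, (F : V ⊗[K] V →ₗ[K] V) (v ⊗ₜ w) = (G : V ⊗[K] V →ₗ[K] V) (v ⊗ₜ w)) :
    F = G :=
  Subtype.ext (TensorProduct.ext' h)

def symProd : Module.Dual K V →ₗ[K] Module.Dual K V →ₗ[K] V →ₗ[K] symBil K V :=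
  LinearMap.mk₂ K
    (fun φ ψ =>
      { toFun u := ⟨(TensorProduct.lift ((LinearMap.mul K K).compl₁₂ φ ψ +
          (LinearMap.mul K K).compl₁₂ ψ φ)).smulRight u, fun v w => by simp [mul_comm, add_comm]⟩
        map_add' u u' := by ext; simp
        map_smul' c u := by ext; simp; module })
    (fun φ φ' ψ => by ext; simp; module)
    (fun c φ ψ => by ext; simp; module)
    (fun φ ψ ψ' => by ext; simp; module)
    (fun c φ ψ => by ext; simp; module)

@[simp]
theorem symProd_apply (φ ψ : Module.Dual K V) (u v w : V) :
    (symProd φ ψ u : V ⊗[K] V →ₗ[K] V) (v ⊗ₜ w) = (φ v * ψ w + ψ v * φ w) • u := by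
  simp [symProd]

theorem symProd_comm (φ ψ : Module.Dual K V) (u : V) : symProd φ ψ u = symProd ψ φ u :=
  symBil_ext fun v w => by simp [add_comm]

noncomputable def traceForm : symBil K V →ₗ[K] Module.Dual K V :=
  LinearMap.llcomp K V (V →ₗ[K] V) K (LinearMap.trace K V) ∘ₗ
    TensorProduct.lcurry (RingHom.id K) V V V ∘ₗ (symBil K V).subtype

theorem traceForm_apply (F : symBil K V) (x : V) :
    traceForm F x =
      LinearMap.trace K V (TensorProduct.lcurry (RingHom.id K) V V V (F : V ⊗[K] V →ₗ[K] V) x) :=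
  rfl

theorem traceForm_symProd [FiniteDimensional K V] (φ ψ : Module.Dual K V) (u x : V) :
    traceForm (symProd φ ψ u) x = φ x * ψ u + ψ x * φ u := by
  have : TensorProduct.lcurry (RingHom.id K) V V V (symProd φ ψ u : V ⊗[K] V →ₗ[K] V) x =
      (φ x • ψ + ψ x • φ).smulRight u := by
    ext; simp
  simp [traceForm_apply, this, LinearMap.trace_smulRight]

noncomputable def evalMap : ((V ⊗[K] V) ⊗[K] symBil K V) →ₗ[K] V :=
  TensorProduct.lift (symBil K V).subtype.flip

noncomputable def traceFstMap : ((V ⊗[K] V) ⊗[K] symBil K V) →ₗ[K] V :=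
  TensorProduct.lift (TensorProduct.lift (LinearMap.smulRightₗ ∘ₗ traceForm.flip))

noncomputable def traceSndMap : ((V ⊗[K] V) ⊗[K] symBil K V) →ₗ[K] V :=
  TensorProduct.lift (TensorProduct.lift (LinearMap.smulRightₗ ∘ₗ traceForm.flip).flip)

@[simp]
theorem evalMap_tmul (x y : V) (F : symBil K V) :
    evalMap ((x ⊗ₜ y) ⊗ₜ F) = (F : V ⊗[K] V →ₗ[K] V) (x ⊗ₜ y) :=
  rfl

@[simp]
theorem traceFstMap_tmul (x y : V) (F : symBil K V) :
    traceFstMap ((x ⊗ₜ y) ⊗ₜ F) = traceForm F x • y :=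
  rfl

@[simp]
theorem traceSndMap_tmul (x y : V) (F : symBil K V) :
    traceSndMap ((x ⊗ₜ y) ⊗ₜ F) = traceForm F y • x :=
  rfl

noncomputable def basicMaps : Fin 3 → ((V ⊗[K] V) ⊗[K] symBil K V) →ₗ[K] V :=
  ![evalMap, traceFstMap, traceSndMap]

end SymProd

section Equivariance

variable {K : Type} [Field K] [CharZero K] {V : Type} [AddCommGroup V] [Module K V]
  [FiniteDimensional K V]

@[simp]
theorem glSymBil_apply_tmul (g : V ≃ₗ[K] V) (F : symBil K V) (v w : V) :
    (glSymBil g F : V ⊗[K] V →ₗ[K] V) (v ⊗ₜ w) =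
      g ((F : V ⊗[K] V →ₗ[K] V) (g.symm v ⊗ₜ g.symm w)) := by
  simp [glSymBil, glBil]

theorem glSymBil_symProd (g : V ≃ₗ[K] V) (φ ψ : Module.Dual K V) (u : V) :
    glSymBil g (symProd φ ψ u) =
      symProd (φ ∘ₗ g.symm.toLinearMap) (ψ ∘ₗ g.symm.toLinearMap) (g u) :=
  symBil_ext fun v w => by simp

variable (K V) in
def equivariantMaps : Submodule K (((V ⊗[K] V) ⊗[K] symBil K V) →ₗ[K] V) where
  carrier := {f | ∀ g : V ≃ₗ[K] V,
    f ∘ₗ TensorProduct.map (TensorProduct.map g.toLinearMap g.toLinearMap) (glSymBil g) =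
      g.toLinearMap ∘ₗ f}
  add_mem' hf hh g := by simp [LinearMap.add_comp, LinearMap.comp_add, hf g, hh g]
  zero_mem' g := by simp
  smul_mem' c f hf g := by simp [LinearMap.smul_comp, LinearMap.comp_smul, hf g]

theorem mem_equivariantMaps_iff_apply {f : ((V ⊗[K] V) ⊗[K] symBil K V) →ₗ[K] V} :
    f ∈ equivariantMaps K V ↔ ∀ (g : V ≃ₗ[K] V) (x y : V) (F : symBil K V),
      f ((g x ⊗ₜ g y) ⊗ₜ glSymBil g F) = g (f ((x ⊗ₜ y) ⊗ₜ F)) := by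
  refine forall_congr' fun g => ⟨fun h x y F => by simpa using congr($h ((x ⊗ₜ y) ⊗ₜ F)),
    fun h => TensorProduct.ext_threefold fun x y F => by simpa using h x y F⟩

theorem apply_tmul_symProd {f : ((V ⊗[K] V) ⊗[K] symBil K V) →ₗ[K] V}
    (hf : f ∈ equivariantMaps K V) (g : V ≃ₗ[K] V) (x y u : V) (φ ψ : Module.Dual K V) :
    f ((g x ⊗ₜ g y) ⊗ₜ symProd φ ψ (g u)) =
      g (f ((x ⊗ₜ y) ⊗ₜ symProd (φ ∘ₗ g.toLinearMap) (ψ ∘ₗ g.toLinearMap) u)) := by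
  rw [← mem_equivariantMaps_iff_apply.1 hf, glSymBil_symProd]
  congr 4 <;> ext <;> simp

theorem apply_tmul_symProd_lie {f : ((V ⊗[K] V) ⊗[K] symBil K V) →ₗ[K] V}
    (hf : f ∈ equivariantMaps K V) {χ : Module.Dual K V} {v : V} (hχv : χ v = 0)
    (x y u : V) (φ ψ : Module.Dual K V) :
    χ x • f ((v ⊗ₜ y) ⊗ₜ symProd φ ψ u) + χ y • f ((x ⊗ₜ v) ⊗ₜ symProd φ ψ u) +
        χ u • f ((x ⊗ₜ y) ⊗ₜ symProd φ ψ v) =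
      φ v • f ((x ⊗ₜ y) ⊗ₜ symProd χ ψ u) + ψ v • f ((x ⊗ₜ y) ⊗ₜ symProd φ χ u) +
        χ (f ((x ⊗ₜ y) ⊗ₜ symProd φ ψ u)) • v := by
  have expand : ∀ s : K, f (((x + (s * χ x) • v) ⊗ₜ (y + (s * χ y) • v)) ⊗ₜ
      symProd φ ψ (u + (s * χ u) • v)) =
      f ((x ⊗ₜ y) ⊗ₜ symProd (φ + (s * φ v) • χ) (ψ + (s * ψ v) • χ) u) +
        (s * χ (f ((x ⊗ₜ y) ⊗ₜ symProd (φ + (s * φ v) • χ) (ψ + (s * ψ v) • χ) u))) • v := by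
    intro s
    have hsv : χ (s • v) = 0 := by simp [hχv]
    have hcomp : ∀ φ' : Module.Dual K V,
        φ' ∘ₗ LinearMap.transvection χ (s • v) = φ' + (s * φ' v) • χ := by
      intro φ'; ext z; simp [LinearMap.transvection.apply]; ring
    simpa [hcomp, LinearMap.transvection.apply, smul_smul, mul_comm s]
      using apply_tmul_symProd hf (LinearEquiv.transvection hsv) x y u φ ψ
  simp only [map_add, map_smul, LinearMap.add_apply, LinearMap.smul_apply, smul_eq_mul,
    TensorProduct.add_tmul, TensorProduct.tmul_add, ← TensorProduct.smul_tmul',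
    TensorProduct.tmul_smul] at expand
  -- `expand` is a polynomial identity in `s`; these are its coefficients of `s⁰, …, s³`.
  have hw := eq_zero_of_forall_sum_pow_smul_eq_zero
    ![0,
      χ x • f ((v ⊗ₜ y) ⊗ₜ symProd φ ψ u) + χ y • f ((x ⊗ₜ v) ⊗ₜ symProd φ ψ u) +
        χ u • f ((x ⊗ₜ y) ⊗ₜ symProd φ ψ v) -
        (φ v • f ((x ⊗ₜ y) ⊗ₜ symProd χ ψ u) + ψ v • f ((x ⊗ₜ y) ⊗ₜ symProd φ χ u) +
          χ (f ((x ⊗ₜ y) ⊗ₜ symProd φ ψ u)) • v),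
      (χ x * χ y) • f ((v ⊗ₜ v) ⊗ₜ symProd φ ψ u) + (χ x * χ u) • f ((v ⊗ₜ y) ⊗ₜ symProd φ ψ v) +
        (χ y * χ u) • f ((x ⊗ₜ v) ⊗ₜ symProd φ ψ v) -
        ((φ v * ψ v) • f ((x ⊗ₜ y) ⊗ₜ symProd χ χ u) +
          (φ v * χ (f ((x ⊗ₜ y) ⊗ₜ symProd χ ψ u)) +
            ψ v * χ (f ((x ⊗ₜ y) ⊗ₜ symProd φ χ u))) • v),
      (χ x * χ y * χ u) • f ((v ⊗ₜ v) ⊗ₜ symProd φ ψ v) -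
        (φ v * ψ v * χ (f ((x ⊗ₜ y) ⊗ₜ symProd χ χ u))) • v]
    (fun s => by
      simp [Fin.sum_univ_four]
      linear_combination (norm := module) expand s) 1
  simpa [sub_eq_zero] using hw

theorem traceForm_glSymBil (g : V ≃ₗ[K] V) (F : symBil K V) (x : V) :
    traceForm (glSymBil g F) (g x) = traceForm F x := by
  have : TensorProduct.lcurry (RingHom.id K) V V V (glSymBil g F : V ⊗[K] V →ₗ[K] V) (g x) =
      g.conj (TensorProduct.lcurry (RingHom.id K) V V V (F : V ⊗[K] V →ₗ[K] V) x) := by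
    ext; simp [LinearEquiv.conj_apply]
  rw [traceForm_apply, this, LinearMap.trace_conj', traceForm_apply]

theorem basicMaps_mem_equivariantMaps (n : Fin 3) : basicMaps n ∈ equivariantMaps K V := by
  rw [mem_equivariantMaps_iff_apply]
  intro g x y F
  fin_cases n <;> simp [basicMaps, traceForm_glSymBil]

end Equivariance

section BasisCoefficients

variable {K : Type} [Field K] {V : Type} [AddCommGroup V] [Module K V]
  {ι : Type} (e : Module.Basis ι K V)

noncomputable def basisCoeff (a b i j k m : ι) : (((V ⊗[K] V) ⊗[K] symBil K V) →ₗ[K] V) →ₗ[K] K :=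
  e.coord m ∘ₗ LinearMap.applyₗ ((e a ⊗ₜ e b) ⊗ₜ symProd (e.coord i) (e.coord j) (e k))

theorem basisCoeff_apply (a b i j k m : ι) (f : ((V ⊗[K] V) ⊗[K] symBil K V) →ₗ[K] V) :
    basisCoeff e a b i j k m f =
      e.coord m (f ((e a ⊗ₜ e b) ⊗ₜ symProd (e.coord i) (e.coord j) (e k))) :=
  rfl

theorem basisCoeff_comm (a b i j k m : ι) :
    basisCoeff e a b i j k m = basisCoeff e a b j i k m := by
  rw [basisCoeff, symProd_comm, basisCoeff]

theorem mem_span_symProd [Fintype ι] [NeZero (2 : K)] (F : symBil K V) :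
    F ∈ Submodule.span K
      (Set.range fun p : ι × ι × ι => symProd (e.coord p.1) (e.coord p.2.1) (e p.2.2)) := by
  classical
  have hF : F = (2⁻¹ : K) • ∑ p : ι × ι × ι,
      e.coord p.2.2 ((F : V ⊗[K] V →ₗ[K] V) (e p.1 ⊗ₜ e p.2.1)) •
        symProd (e.coord p.1) (e.coord p.2.1) (e p.2.2) := by
    refine Subtype.ext ((e.tensorProduct e).ext fun ⟨a, b⟩ => ?_)
    simp [Fintype.sum_prod_type, Finsupp.single_apply, add_smul, Finset.sum_add_distrib,
      F.2 (e b) (e a), Module.Basis.sum_repr]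
    rw [← add_smul, ← two_mul, mul_inv_cancel₀ two_ne_zero, one_smul]
  rw [hF]
  exact Submodule.smul_mem _ _ <| Submodule.sum_mem _ fun p _ =>
    Submodule.smul_mem _ _ <| Submodule.subset_span ⟨p, rfl⟩

theorem eq_zero_of_basisCoeff_eq_zero [Fintype ι] [NeZero (2 : K)]
    {f : ((V ⊗[K] V) ⊗[K] symBil K V) →ₗ[K] V}
    (h : ∀ a b i j k m, basisCoeff e a b i j k m f = 0) : f = 0 := by
  have hgen : ∀ i j k,
      f ∘ₗ (TensorProduct.mk K _ _).flip (symProd (e.coord i) (e.coord j) (e k)) = 0 :=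
    fun i j k => (e.tensorProduct e).ext fun ⟨a, b⟩ =>
      e.ext_elem fun m => by simpa [basisCoeff_apply] using h a b i j k m
  refine TensorProduct.ext' fun u F => ?_
  induction mem_span_symProd e F using Submodule.span_induction with
  | mem G hG =>
    obtain ⟨⟨i, j, k⟩, rfl⟩ := hG
    simpa using congr($(hgen i j k) u)
  | zero => simp
  | add G G' _ _ hG hG' => simp [TensorProduct.tmul_add, hG, hG']
  | smul c G _ hG => simp [TensorProduct.tmul_smul, hG]

/-- Up to `i ↔ j`, the only coordinates with `(a, b, k) = (x 0, x 1, x 2)` that the weight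
condition `multiset_eq_of_basisCoeff_ne_zero` allows to be nonzero. -/
noncomputable def seedCoeffs (x : Fin 3 ↪ ι) :
    (((V ⊗[K] V) ⊗[K] symBil K V) →ₗ[K] V) →ₗ[K] Fin 3 → K :=
  LinearMap.pi ![basisCoeff e (x 0) (x 1) (x 0) (x 1) (x 2) (x 2),
    basisCoeff e (x 0) (x 1) (x 0) (x 2) (x 2) (x 1),
    basisCoeff e (x 0) (x 1) (x 1) (x 2) (x 2) (x 0)]

end BasisCoefficients

section CoefficientRelations

variable {K : Type} [Field K] [CharZero K] {V : Type} [AddCommGroup V] [Module K V]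
  [FiniteDimensional K V] {ι : Type} (e : Module.Basis ι K V)
  {f : ((V ⊗[K] V) ⊗[K] symBil K V) →ₗ[K] V}

theorem basisCoeff_perm (hf : f ∈ equivariantMaps K V) (σ : Equiv.Perm ι) (a b i j k m : ι) :
    basisCoeff e (σ a) (σ b) (σ i) (σ j) (σ k) (σ m) f = basisCoeff e a b i j k m f := by
  classical
  have hσ : ∀ r, e.coord (σ r) ∘ₗ (e.equiv e σ).toLinearMap = e.coord r := fun r =>
    e.ext fun s => by simp [Module.Basis.equiv_apply, Finsupp.single_apply, σ.injective.eq_iff]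
  have h := apply_tmul_symProd hf (e.equiv e σ) (e a) (e b) (e k) (e.coord (σ i)) (e.coord (σ j))
  simp only [Module.Basis.equiv_apply, hσ] at h
  rw [basisCoeff_apply, h]
  exact LinearMap.congr_fun (hσ m) _

theorem basisCoeff_torus (hf : f ∈ equivariantMaps K V) (w : ι → Kˣ) (a b i j k m : ι) :
    (w a * w b * w k : K) * basisCoeff e a b i j k m f =
      (w i * w j * w m : K) * basisCoeff e a b i j k m f := by
  set D := e.equiv (e.unitsSMul w) (Equiv.refl ι)
  have hD : ∀ r, D (e r) = (w r : K) • e r := fun r => by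
    simp [D, Module.Basis.equiv_apply, Module.Basis.unitsSMul_apply, Units.smul_def]
  have hcoord : ∀ r, e.coord r ∘ₗ D.toLinearMap = (w r : K) • e.coord r := fun r =>
    e.ext fun s => by by_cases hs : s = r <;> simp [hD, hs]
  have h := congr(e.coord m $(apply_tmul_symProd hf D (e a) (e b) (e k) (e.coord i) (e.coord j)))
  have hDm : ∀ z, e.coord m (D z) = (w m : K) * e.coord m z := fun z => by
    simpa using LinearMap.congr_fun (hcoord m) z
  rw [hD, hD, hD, hcoord, hcoord, hDm] at h
  simp only [map_smul, LinearMap.smul_apply, ← TensorProduct.smul_tmul', TensorProduct.tmul_smul,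
    smul_eq_mul] at h
  rw [basisCoeff_apply]
  linear_combination h

theorem multiset_eq_of_basisCoeff_ne_zero (hf : f ∈ equivariantMaps K V) {a b i j k m : ι}
    (h : basisCoeff e a b i j k m f ≠ 0) : ({a, b, k} : Multiset ι) = {i, j, m} := by
  classical
  ext q
  let w : ι → Kˣ := Pi.mulSingle q (Units.mk0 2 two_ne_zero)
  have hw : ∀ r, (w r : K) = 2 ^ Multiset.count q {r} := fun r => by
    rcases eq_or_ne r q with rfl | hr
    · simp [w]
    · simp [w, hr, hr.symm]
  have h2 := mul_right_cancel₀ h (basisCoeff_torus e hf w a b i j k m)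
  simp only [hw, ← pow_add] at h2
  have := Nat.pow_right_injective le_rfl (by exact_mod_cast h2 : 2 ^ _ = 2 ^ _)
  simp only [Multiset.insert_eq_cons, Multiset.count_cons, Multiset.count_singleton] at this ⊢
  omega

theorem basisCoeff_lie (hf : f ∈ equivariantMaps K V) {p q : ι} (hpq : p ≠ q) (a b i j k m : ι) :
    e.coord q (e a) * basisCoeff e p b i j k m f + e.coord q (e b) * basisCoeff e a p i j k m f +
        e.coord q (e k) * basisCoeff e a b i j p m f =
      e.coord i (e p) * basisCoeff e a b q j k m f + e.coord j (e p) * basisCoeff e a b i q k m f +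
        e.coord m (e p) * basisCoeff e a b i j k q f := by
  have hqp : e.coord q (e p) = 0 := by simp [hpq]
  have h := congr(e.coord m
    $(apply_tmul_symProd_lie hf hqp (e a) (e b) (e k) (e.coord i) (e.coord j)))
  simp only [map_add, map_smul, smul_eq_mul] at h
  simp only [basisCoeff_apply]
  linear_combination h

end CoefficientRelations

section Vanishing

variable {K : Type} [Field K] [CharZero K] {V : Type} [AddCommGroup V] [Module K V]
  [FiniteDimensional K V] {ι : Type} (e : Module.Basis ι K V)
  {f : ((V ⊗[K] V) ⊗[K] symBil K V) →ₗ[K] V}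

theorem basisCoeff_eq_zero_of_seedCoeffs_eq_zero (hf : f ∈ equivariantMaps K V) {x : Fin 3 ↪ ι}
    (h : seedCoeffs e x f = 0) (i j m : ι) : basisCoeff e (x 0) (x 1) i j (x 2) m f = 0 := by
  by_contra hne
  have hperm : [i, j, m].Perm [x 0, x 1, x 2] :=
    Multiset.coe_eq_coe.1 (multiset_eq_of_basisCoeff_ne_zero e hf hne).symm
  have h0 := congrFun h 0
  have h1 := congrFun h 1
  have h2 := congrFun h 2
  simp [seedCoeffs] at h0 h1 h2
  have hcases := List.mem_permutations.2 hperm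
  simp [List.permutations, List.permutationsAux, List.permutationsAux.rec] at hcases
  rcases hcases with ⟨rfl, rfl, rfl⟩ | ⟨rfl, rfl, rfl⟩ | ⟨rfl, rfl, rfl⟩ | ⟨rfl, rfl, rfl⟩ |
    ⟨rfl, rfl, rfl⟩ | ⟨rfl, rfl, rfl⟩ <;>
  apply hne <;> first | assumption | rwa [basisCoeff_comm]

theorem basisCoeff_eq_zero_of_pairwise_ne (hf : f ∈ equivariantMaps K V) {x : Fin 3 ↪ ι}
    (h : seedCoeffs e x f = 0) {a b k : ι} (hab : a ≠ b) (hak : a ≠ k) (hbk : b ≠ k)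
    (i j m : ι) : basisCoeff e a b i j k m f = 0 := by
  let y : Fin 3 ↪ ι := ⟨![a, b, k], fun r s => by fin_cases r <;> fin_cases s <;> simp [*, Ne.symm]⟩
  obtain ⟨σ, hσ⟩ := Equiv.Perm.exists_smul_eq_embedding x y
  have hy : ∀ r, σ (x r) = ![a, b, k] r := fun r => congr($hσ r)
  have := basisCoeff_perm e hf σ (x 0) (x 1) (σ⁻¹ i) (σ⁻¹ j) (x 2) (σ⁻¹ m)
  simp only [hy] at this
  simpa using this.trans (basisCoeff_eq_zero_of_seedCoeffs_eq_zero e hf h _ _ _)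

theorem basisCoeff_eq_zero_of_ne (hf : f ∈ equivariantMaps K V) {x : Fin 3 ↪ ι}
    (h : seedCoeffs e x f = 0) {b k : ι} (hbk : b ≠ k) (a i j m : ι) :
    basisCoeff e a b i j k m f = 0 := by
  obtain ⟨z, hzb, hzk⟩ := exists_ne_and_ne x b k
  have hz : ∀ i j m, basisCoeff e z b i j k m f = 0 :=
    basisCoeff_eq_zero_of_pairwise_ne e hf h hzb hzk hbk
  rcases eq_or_ne a z with rfl | haz
  · exact hz i j m
  · have rel := basisCoeff_lie e hf haz z b i j k m
    simpa [hz, hzb.symm, hzk.symm] using rel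

theorem basisCoeff_eq_zero (hf : f ∈ equivariantMaps K V) {x : Fin 3 ↪ ι}
    (h : seedCoeffs e x f = 0) (a b i j k m : ι) : basisCoeff e a b i j k m f = 0 := by
  obtain ⟨z, hza, hzk⟩ := exists_ne_and_ne x a k
  have hz : ∀ i j m, basisCoeff e a z i j k m f = 0 := basisCoeff_eq_zero_of_ne e hf h hzk a
  rcases eq_or_ne b z with rfl | hbz
  · exact hz i j m
  · have rel := basisCoeff_lie e hf hbz a z i j k m
    simpa [hz, hza.symm, hzk.symm] using rel

theorem eq_zero_of_seedCoeffs_eq_zero [Fintype ι] (hf : f ∈ equivariantMaps K V) {x : Fin 3 ↪ ι}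
    (h : seedCoeffs e x f = 0) : f = 0 :=
  eq_zero_of_basisCoeff_eq_zero e (basisCoeff_eq_zero e hf h)

end Vanishing

section Classification

variable {K : Type} [Field K] {V : Type} [AddCommGroup V] [Module K V] [FiniteDimensional K V]

theorem seedCoeffs_basicMaps {ι : Type} (e : Module.Basis ι K V) (x : Fin 3 ↪ ι) (n : Fin 3) :
    seedCoeffs e x (basicMaps n) = Pi.single n 1 := by
  ext r
  fin_cases n <;> fin_cases r <;>
    simp [seedCoeffs, basicMaps, basisCoeff_apply, traceForm_symProd, x.injective.eq_iff]

theorem linearIndependent_basicMaps (h3 : 3 ≤ Module.finrank K V) :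
    LinearIndependent K (basicMaps (K := K) (V := V)) := by
  refine LinearIndependent.of_comp (seedCoeffs (Module.finBasis K V) (Fin.castLEEmb h3)) ?_
  convert (Pi.basisFun K (Fin 3)).linearIndependent
  ext1 n
  simp [seedCoeffs_basicMaps]

variable [CharZero K]

theorem mem_span_basicMaps_iff (h3 : 3 ≤ Module.finrank K V)
    {f : ((V ⊗[K] V) ⊗[K] symBil K V) →ₗ[K] V} :
    f ∈ Submodule.span K (Set.range basicMaps) ↔ f ∈ equivariantMaps K V := by
  refine ⟨fun hf => Submodule.span_le.2 (Set.range_subset_iff.2 basicMaps_mem_equivariantMaps) hf,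
    fun hf => ?_⟩
  let c := seedCoeffs (Module.finBasis K V) (Fin.castLEEmb h3) f
  have hsub : f - ∑ n, c n • basicMaps n = 0 := by
    refine eq_zero_of_seedCoeffs_eq_zero (Module.finBasis K V)
      (sub_mem hf (sum_mem fun n _ => Submodule.smul_mem _ _ (basicMaps_mem_equivariantMaps n)))
      (x := Fin.castLEEmb h3) ?_
    ext r
    simp [c, seedCoeffs_basicMaps, Pi.single_apply]
  rw [sub_eq_zero.1 hsub]
  exact sum_mem fun n _ => Submodule.smul_mem _ _ (Submodule.subset_span ⟨n, rfl⟩)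

end Classification

section

variable {K : Type} [Field K] [CharZero K] {V : Type} [AddCommGroup V] [Module K V]
  [FiniteDimensional K V]

/-- If `dim V ≥ 3`, the space of `GL(V)`-equivariant linear maps
`Lin(V^{⊗2} ⊗ Sym(V^{⊗2}, V), V)` is 3-dimensional, spanned by
`X⊗Y⊗F ↦ F(X,Y)`, `X⊗Y⊗F ↦ Tr(F(X,−))·Y` and `X⊗Y⊗F ↦ Tr(F(Y,−))·X`:
these three maps are linearly independent and a map is equivariant iff it lies
in their span. -/
theorem equivariant_space_sym_three_dimensional
    (h3 : 3 ≤ Module.finrank K V) :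
    ∃ m : Fin 3 → (((V ⊗[K] V) ⊗[K] (symBil K V)) →ₗ[K] V),
      (∀ (X Y : V) (F : symBil K V),
          m 0 ((X ⊗ₜ[K] Y) ⊗ₜ[K] F) = (F : (V ⊗[K] V) →ₗ[K] V) (X ⊗ₜ[K] Y) ∧
          m 1 ((X ⊗ₜ[K] Y) ⊗ₜ[K] F) =
            (LinearMap.trace K V
              (TensorProduct.lcurry (RingHom.id K) V V V (F : (V ⊗[K] V) →ₗ[K] V) X)) • Y ∧
          m 2 ((X ⊗ₜ[K] Y) ⊗ₜ[K] F) =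
            (LinearMap.trace K V
              (TensorProduct.lcurry (RingHom.id K) V V V (F : (V ⊗[K] V) →ₗ[K] V) Y)) • X) ∧
      LinearIndependent K m ∧
      (∀ f : ((V ⊗[K] V) ⊗[K] (symBil K V)) →ₗ[K] V,
        (∀ g : V ≃ₗ[K] V,
          f ∘ₗ TensorProduct.map
              (TensorProduct.map g.toLinearMap g.toLinearMap) (glSymBil g) =
            g.toLinearMap ∘ₗ f) ↔
        f ∈ Submodule.span K (Set.range m)) :=
  ⟨basicMaps, fun _ _ _ => ⟨rfl, rfl, rfl⟩, linearIndependent_basicMaps h3,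
    fun _ => (mem_span_basicMaps_iff h3).symm⟩

end
end
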